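/- Set A := {(u·(2|u|)^∞, u·(2|u|+1)^∞) : u ∈ ω^{<ω}} ⊆ ω^ω × ω^ω and C^ε_i := {u·(2i+ε)^∞ : u ∈ ω^i} for (ε,i) ∈ 2×ω. Then there is no continuous f: ω^ω → ω^ω with ⋃_i C⁰_i × C¹_i ⊆ (f×f)^{-1}(A). Indeed, any such f would be constant. -/

import Mathlib

/-!
Write `α|i` for the first `i` entries of `α`. For every `α, β` and `i`, the pairs
`((α|i)·(2i)^∞, (β|i)·(2i+1)^∞)` and `((β|i)·(2i)^∞, (β|i)·(2i+1)^∞)` lie in `C⁰_i × C¹_i`,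
and the second coordinate of a pair in `A` determines the first, so `f` agrees on
`(α|i)·(2i)^∞` and `(β|i)·(2i)^∞`. These tend to `α` and `β` as `i → ∞`, hence continuity
forces `f α = f β`. A constant `f` is impossible, since the two coordinates of a pair in `A`
differ.
-/

/-- Concatenation of a finite sequence of naturals with an infinite one. -/
def catN (u : List ℕ) (γ : ℕ → ℕ) : ℕ → ℕ :=
  fun n => u.getD n (γ (n - u.length))

/-- `A := {(u·(2|u|)^∞, u·(2|u|+1)^∞) : u ∈ ω^{<ω}}`. -/
def Arel : Set ((ℕ → ℕ) × (ℕ → ℕ)) :=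
  {p | ∃ u : List ℕ, p = (catN u fun _ => 2 * u.length, catN u fun _ => 2 * u.length + 1)}

/-- `C^ε_i := {u·(2i+ε)^∞ : u ∈ ω^i}`. -/
def Ceps (ε : Bool) (i : ℕ) : Set (ℕ → ℕ) :=
  {x | ∃ u : List ℕ, u.length = i ∧ x = catN u fun _ => 2 * i + (if ε then 1 else 0)}

open Filter Topology

lemma catN_of_length_le (u : List ℕ) (γ : ℕ → ℕ) {n : ℕ} (h : u.length ≤ n) :
    catN u γ n = γ (n - u.length) := by
  simp [catN, List.getElem?_eq_none h]

lemma catN_of_lt_length (u : List ℕ) (γ : ℕ → ℕ) {n : ℕ} (h : n < u.length) :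
    catN u γ n = u[n] := by
  simp [catN, List.getElem?_eq_getElem h]

namespace Arel

lemma fst_eq_of_snd_eq {p p' q : ℕ → ℕ} (h : (p, q) ∈ Arel) (h' : (p', q) ∈ Arel) :
    p = p' := by
  obtain ⟨u, rfl, rfl⟩ := h
  obtain ⟨v, hv⟩ := h'
  obtain ⟨hv₁, hv₂⟩ := Prod.mk.inj hv
  have hlen : u.length = v.length := by
    have e := congrFun hv₂ (max u.length v.length)
    rw [catN_of_length_le _ _ (le_max_left _ _), catN_of_length_le _ _ (le_max_right _ _)] at e
    omega
  have huv : u = v := List.ext_getElem hlen fun n hu hv => by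
    simpa [catN_of_lt_length _ _ hu, catN_of_lt_length _ _ hv] using congrFun hv₂ n
  rw [hv₁, huv]

lemma fst_ne_snd {p q : ℕ → ℕ} (h : (p, q) ∈ Arel) : p ≠ q := by
  obtain ⟨u, rfl, rfl⟩ := h
  intro e
  have e := congrFun e u.length
  rw [catN_of_length_le _ _ le_rfl, catN_of_length_le _ _ le_rfl] at e
  omega

end Arel

/-- The point `(α|i)·(2i+ε)^∞` of `C^ε_i`. -/
def cepsApprox (ε : Bool) (α : ℕ → ℕ) (i : ℕ) : ℕ → ℕ :=
  catN (List.ofFn fun k : Fin i => α k) fun _ => 2 * i + (if ε then 1 else 0)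

lemma cepsApprox_mem_Ceps (ε : Bool) (α : ℕ → ℕ) (i : ℕ) : cepsApprox ε α i ∈ Ceps ε i :=
  ⟨_, List.length_ofFn, rfl⟩

lemma tendsto_cepsApprox (ε : Bool) (α : ℕ → ℕ) : Tendsto (cepsApprox ε α) atTop (𝓝 α) := by
  rw [tendsto_pi_nhds]
  intro n
  apply tendsto_const_nhds.congr'
  filter_upwards [eventually_gt_atTop n] with i hi
  simp [cepsApprox, catN_of_lt_length _ _ (by simpa using hi : n < (List.ofFn _).length)]

lemma apply_eq_of_continuous_of_mapsTo_Arel {f : (ℕ → ℕ) → (ℕ → ℕ)} (hf : Continuous f)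
    (hA : ∀ x y, (∃ i, x ∈ Ceps false i ∧ y ∈ Ceps true i) → (f x, f y) ∈ Arel)
    (α β : ℕ → ℕ) : f α = f β := by
  have hmem (γ : ℕ → ℕ) (i : ℕ) : (f (cepsApprox false γ i), f (cepsApprox true β i)) ∈ Arel :=
    hA _ _ ⟨i, cepsApprox_mem_Ceps _ _ _, cepsApprox_mem_Ceps _ _ _⟩
  have hseq : (fun i => f (cepsApprox false α i)) = fun i => f (cepsApprox false β i) :=
    funext fun i => Arel.fst_eq_of_snd_eq (hmem α i) (hmem β i)
  have hα := (hf.tendsto α).comp (tendsto_cepsApprox false α)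
  have hβ := (hf.tendsto β).comp (tendsto_cepsApprox false β)
  exact tendsto_nhds_unique (f := fun i => f (cepsApprox false α i)) hα (hseq ▸ hβ)

/-- there is no continuous `f : ω^ω → ω^ω` with
`⋃_i C⁰_i × C¹_i ⊆ (f × f)⁻¹(A)`. -/
theorem stmt10 :
    ¬ ∃ f : (ℕ → ℕ) → (ℕ → ℕ), Continuous f ∧
      ∀ x y, (∃ i, x ∈ Ceps false i ∧ y ∈ Ceps true i) → (f x, f y) ∈ Arel := by
  rintro ⟨f, hf, hA⟩
  let x := cepsApprox false 0 0
  let y := cepsApprox true 0 0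
  have hxy : (f x, f y) ∈ Arel := hA x y ⟨0, cepsApprox_mem_Ceps _ _ _, cepsApprox_mem_Ceps _ _ _⟩
  exact Arel.fst_ne_snd hxy (apply_eq_of_continuous_of_mapsTo_Arel hf hA x y)
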